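/- A countable group G is left-orderable if and only if there exists an injective group homomorphism from G into the group of orientation-preserving homeomorphisms of ℝ (equivalently, the group of strictly increasing bijections ℝ → ℝ). -/

import Mathlib

/-!
A left order on a countable group `G` makes `G ×ₗ ℚ` a countable dense linear order without
endpoints, hence order-isomorphic to `ℚ` (Cantor); left multiplication on the first coordinate
is a faithful order-preserving action of `G` on it, and order automorphisms of `ℚ` extend to `ℝ`
by taking suprema. Conversely, a faithful action on `ℝ` is already faithful on an enumeration
`q₀, q₁, …` of `ℚ`, and comparing the sequences `(ρ g qₙ)ₙ` lexicographically is a left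
order, because every `ρ z` is increasing.
-/

/-- A left order on a group `G`: a strict linear order invariant under left multiplication. -/
structure IsLeftOrder {G : Type*} [Group G] (r : G → G → Prop) : Prop where
  irrefl : ∀ x, ¬ r x x
  trans : ∀ x y z, r x y → r y z → r x z
  total : ∀ x y, x ≠ y → r x y ∨ r y x
  mul_left : ∀ x y z, r x y → r (z * x) (z * y)

open Function

namespace IsLeftOrder

variable {G : Type*} [Group G] {r : G → G → Prop}

theorem isStrictTotalOrder (h : IsLeftOrder r) : IsStrictTotalOrder G r where
  irrefl := h.irrefl
  trans := h.trans
  trichotomous a b hab hba := by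
    by_contra hne
    exact (h.total a b hne).elim hab hba

noncomputable abbrev linearOrder (h : IsLeftOrder r) : LinearOrder G :=
  haveI := h.isStrictTotalOrder
  haveI := Classical.decRel r
  linearOrderOfSTO r

theorem mulLeftMono (h : IsLeftOrder r) : letI := h.linearOrder; MulLeftMono G := by
  let := h.linearOrder
  exact ⟨fun z x y hxy => hxy.elim (fun e => Or.inl (congrArg (z * ·) e))
    fun hr => Or.inr (h.mul_left x y z hr)⟩

theorem comap {β : Type*} [LinearOrder β] {φ : G → β} (hφ : Injective φ)
    (hmul : ∀ x y z, φ x < φ y → φ (z * x) < φ (z * y)) :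
    IsLeftOrder fun x y => φ x < φ y where
  irrefl x := lt_irrefl (φ x)
  trans _ _ _ := lt_trans
  total _ _ hxy := lt_or_gt_of_ne (hφ.ne hxy)
  mul_left := hmul

end IsLeftOrder

theorem Monotone.apply_eq_self_of_forall_rat {g : ℝ → ℝ} (hg : Monotone g)
    (h : ∀ q : ℚ, g q = q) (x : ℝ) : g x = x :=
  le_antisymm (le_of_forall_lt_rat_imp_le fun q hq => (hg hq.le).trans (h q).le)
    (le_of_forall_rat_lt_imp_le fun q hq => (h q).ge.trans (hg hq.le))

namespace OrderIso

@[simps]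
def mulLeftHom (G : Type*) [Group G] [LE G] [MulLeftMono G] : G →* (G ≃o G) where
  toFun := OrderIso.mulLeft
  map_one' := ext <| funext one_mul
  map_mul' g h := ext <| funext (mul_assoc g h)

theorem mulLeftHom_injective (G : Type*) [Group G] [LE G] [MulLeftMono G] :
    Injective (mulLeftHom G) := fun g h hgh => by
  simpa using DFunLike.congr_fun hgh 1

@[simps]
def prodLexLeftHom (α β : Type*) [Preorder α] [Preorder β] :
    (α ≃o α) →* (α ×ₗ β ≃o α ×ₗ β) where
  toFun f := Prod.Lex.prodLexCongr f (refl β)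
  map_one' := rfl
  map_mul' _ _ := rfl

theorem prodLexLeftHom_injective (α β : Type*) [Preorder α] [Preorder β] [Nonempty β] :
    Injective (prodLexLeftHom α β) := fun f g hfg => by
  obtain ⟨b⟩ := ‹Nonempty β›
  ext a
  simpa using congrArg (fun p => (ofLex p).1) (DFunLike.congr_fun hfg (toLex (a, b)))

def autCongr {α β : Type*} [LE α] [LE β] (e : α ≃o β) : (α ≃o α) ≃* (β ≃o β) where
  toFun f := (e.symm.trans f).trans e
  invFun f := (e.trans f).trans e.symm
  left_inv f := by ext; simp
  right_inv f := by ext; simp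
  map_mul' f g := by ext; simp [RelIso.mul_apply]

theorem ext_rat {f g : ℝ ≃o ℝ} (h : ∀ q : ℚ, f q = g q) : f = g :=
  ext <| Rat.denseRange_cast.equalizer f.continuous g.continuous (funext h)

noncomputable def ratExtend (f : ℚ ≃o ℚ) (x : ℝ) : ℝ :=
  sSup ((fun q : ℚ => (f q : ℝ)) '' {q : ℚ | (q : ℝ) < x})

variable (f : ℚ ≃o ℚ)

theorem le_ratExtend {q : ℚ} {x : ℝ} (hq : (q : ℝ) < x) : (f q : ℝ) ≤ ratExtend f x := by
  obtain ⟨p, hp⟩ := exists_rat_gt x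
  refine le_csSup ⟨f p, ?_⟩ ⟨q, hq, rfl⟩
  rintro _ ⟨q', hq', rfl⟩
  show (f q' : ℝ) ≤ f p
  exact_mod_cast f.monotone (by exact_mod_cast (hq'.trans hp).le)

theorem ratExtend_le {x b : ℝ} (h : ∀ q : ℚ, (q : ℝ) < x → (f q : ℝ) ≤ b) :
    ratExtend f x ≤ b := by
  obtain ⟨p, hp⟩ := exists_rat_lt x
  exact csSup_le ⟨f p, p, hp, rfl⟩ (by rintro _ ⟨q, hq, rfl⟩; exact h q hq)

theorem ratExtend_mono : Monotone (ratExtend f) := fun _ _ hxy =>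
  ratExtend_le f fun _ hq => le_ratExtend f (hq.trans_le hxy)

@[simp]
theorem ratExtend_coe (q : ℚ) : ratExtend f q = f q := by
  refine le_antisymm (ratExtend_le f fun p hp => ?_) (le_of_forall_rat_lt_imp_le fun p hp => ?_)
  · exact_mod_cast f.monotone (by exact_mod_cast hp.le)
  · have hpq : f.symm p < q := by
      rw [← f.lt_iff_lt, apply_symm_apply]
      exact_mod_cast hp
    simpa using le_ratExtend f (q := f.symm p) (by exact_mod_cast hpq)

theorem ratExtend_symm_ratExtend (x : ℝ) : ratExtend f.symm (ratExtend f x) = x :=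
  ((ratExtend_mono f.symm).comp (ratExtend_mono f)).apply_eq_self_of_forall_rat (by simp) x

noncomputable def ratExtendIso : ℝ ≃o ℝ :=
  ofHomInv ⟨ratExtend f, ratExtend_mono f⟩ ⟨ratExtend f.symm, ratExtend_mono f.symm⟩
    (OrderHom.ext _ _ <| funext fun x => by simpa using ratExtend_symm_ratExtend f.symm x)
    (OrderHom.ext _ _ <| funext (ratExtend_symm_ratExtend f))

@[simp]
theorem ratExtendIso_coe (q : ℚ) : ratExtendIso f q = f q :=
  ratExtend_coe f q

@[simps]
noncomputable def ratExtendHom : (ℚ ≃o ℚ) →* (ℝ ≃o ℝ) where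
  toFun := ratExtendIso
  map_one' := ext_rat fun q => by simp
  map_mul' f g := ext_rat fun q => by simp [RelIso.mul_apply]

theorem ratExtendHom_injective : Injective ratExtendHom := fun f g hfg => by
  ext q
  simpa using congrArg (fun φ : ℝ ≃o ℝ => φ q) hfg

end OrderIso

theorem exists_injective_hom_orderIso_rat (α : Type*) [LinearOrder α] [Countable α]
    [Nonempty α] : ∃ φ : (α ≃o α) →* (ℚ ≃o ℚ), Injective φ := by
  have : Countable (α ×ₗ ℚ) := inferInstanceAs (Countable (α × ℚ))
  obtain ⟨e⟩ := Order.iso_of_countable_dense (α ×ₗ ℚ) ℚ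
  exact ⟨(OrderIso.autCongr e).toMonoidHom.comp (OrderIso.prodLexLeftHom α ℚ),
    (OrderIso.autCongr e).injective.comp (OrderIso.prodLexLeftHom_injective α ℚ)⟩

theorem exists_injective_hom_orderIso_real (G : Type*) [Group G] [LinearOrder G] [MulLeftMono G]
    [Countable G] : ∃ ρ : G →* (ℝ ≃o ℝ), Injective ρ := by
  obtain ⟨φ, hφ⟩ := exists_injective_hom_orderIso_rat G
  exact ⟨OrderIso.ratExtendHom.comp (φ.comp (OrderIso.mulLeftHom G)),
    OrderIso.ratExtendHom_injective.comp (hφ.comp (OrderIso.mulLeftHom_injective G))⟩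

theorem Pi.toLex_comp_lt_toLex_comp {ι α β : Type*} [LT ι] [Preorder α] [Preorder β]
    {f : α → β} (hf : StrictMono f) {x y : ι → α} (h : toLex x < toLex y) :
    toLex (f ∘ x) < toLex (f ∘ y) := by
  obtain ⟨i, hi, hlt⟩ := h
  exact ⟨i, fun j hj => congrArg f (hi j hj), hf hlt⟩

theorem exists_isLeftOrder_of_injective_eval {G ι α : Type*} [Group G] [LinearOrder ι]
    [WellFoundedLT ι] [LinearOrder α] (ρ : G →* (α ≃o α)) (s : ι → α)
    (hs : Injective fun g i => ρ g (s i)) : ∃ r : G → G → Prop, IsLeftOrder r := by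
  refine ⟨_, IsLeftOrder.comap (φ := fun g => toLex fun i => ρ g (s i)) hs
    fun x y z hxy => ?_⟩
  simp only [map_mul, RelIso.mul_apply]
  exact Pi.toLex_comp_lt_toLex_comp (ρ z).strictMono hxy

/-- A countable group is left-orderable iff it embeds into the group `ℝ ≃o ℝ` of
orientation-preserving homeomorphisms (strictly increasing bijections) of the real line. -/
theorem countable_leftOrderable_iff_embeds_in_homeoPlus {G : Type*} [Group G] [Countable G] :
    (∃ r : G → G → Prop, IsLeftOrder r) ↔
      ∃ ρ : G →* (ℝ ≃o ℝ), Function.Injective ρ := by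
  constructor
  · rintro ⟨r, hr⟩
    let := hr.linearOrder
    have := hr.mulLeftMono
    exact exists_injective_hom_orderIso_real G
  · rintro ⟨ρ, hρ⟩
    obtain ⟨q, hq⟩ := exists_surjective_nat ℚ
    refine exists_isLeftOrder_of_injective_eval ρ (fun n => (q n : ℝ)) fun g h hgh => hρ ?_
    refine OrderIso.ext_rat fun p => ?_
    obtain ⟨n, rfl⟩ := hq p
    exact congrFun hgh n
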